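/- For the CGARZ model, the Riemann-problem intermediate state exists: given a left state (ρ⁻, w⁻) with ρ⁻ ∈ [0, ρ_max] and a right velocity v⁺ ∈ [0, V_max], there is a unique ρ* ∈ [0, ρ_max] with V(ρ*, w⁻) = v⁺, where V(ρ,w) = Q(ρ,w)/ρ for ρ > 0 and V(0,w) = V_max. -/
import Mathlib


open Set

theorem cgarz_riemann_intermediate_state
    (Vmax ρf ρmax wL wR : ℝ)
    (hV : 0 < Vmax) (hρf : 0 < ρf) (hρfm : ρf < ρmax) (hw : wL < wR)
    (lam : ℝ → ℝ) (hlam : ∀ w, lam w = (w - wL) / (wR - wL))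
    (Q : ℝ → ℝ → ℝ)
    (hQ : ∀ ρ w, Q ρ w =
      if ρ ≤ ρf then ρ * Vmax * (1 - ρ / ρmax)
      else (1 - lam w) * (ρf * Vmax * (1 - ρ / ρmax)) +
           lam w * (ρ * Vmax * (1 - ρ / ρmax)))
    (V : ℝ → ℝ → ℝ)
    (hVdef : ∀ ρ w, V ρ w = if ρ = 0 then Vmax else Q ρ w / ρ)
    (wminus vplus : ℝ) (hwm : wminus ∈ Icc wL wR)
    (hvp : vplus ∈ Icc 0 Vmax) :
    ∃! ρstar, ρstar ∈ Icc (0 : ℝ) ρmax ∧ V ρstar wminus = vplus := by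
  obtain ⟨hwm1, hwm2⟩ := hwm
  obtain ⟨hv0, hvV⟩ := hvp
  have hρm : 0 < ρmax := hρf.trans hρfm
  set l := lam wminus with hldef
  have hl0 : 0 ≤ l := by
    rw [hldef, hlam]; exact div_nonneg (by linarith) (by linarith)
  have hl1 : l ≤ 1 := by
    rw [hldef, hlam, div_le_one (by linarith)]; linarith
  -- formula in the free regime
  have hVfree : ∀ ρ, 0 ≤ ρ → ρ ≤ ρf → V ρ wminus = Vmax * (1 - ρ / ρmax) := by
    intro ρ h0 h1
    rcases eq_or_lt_of_le h0 with h | h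
    · rw [hVdef, if_pos h.symm, ← h]
      simp
    · rw [hVdef, if_neg h.ne', hQ, if_pos h1]
      field_simp
  -- formula in the congested regime
  have hVcong : ∀ ρ, ρf ≤ ρ →
      V ρ wminus = Vmax * (1 - ρ / ρmax) * (l + (1 - l) * ρf / ρ) := by
    intro ρ h1
    rcases eq_or_lt_of_le h1 with h | h
    · rw [← h, hVfree ρf hρf.le le_rfl]
      rw [mul_div_assoc, div_self hρf.ne']
      ring
    · have hρ0 : (0:ℝ) < ρ := hρf.trans h
      rw [hVdef, if_neg hρ0.ne', hQ, if_neg (not_le.2 h)]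
      field_simp
      ring
  -- positivity of the congested correction factor
  have hfac : ∀ ρ, ρf ≤ ρ → 0 < l + (1 - l) * ρf / ρ := by
    intro ρ h1
    have hρ0 : (0:ℝ) < ρ := hρf.trans_le h1
    have hx0 : 0 < ρf / ρ := div_pos hρf hρ0
    have hx1 : ρf / ρ ≤ 1 := (div_le_one hρ0).2 h1
    have h2 : (1 - l) * ρf / ρ = (1 - l) * (ρf / ρ) := by ring
    rw [h2]
    nlinarith [mul_nonneg hl0 (sub_nonneg.2 hx1)]
  -- strict monotonicity
  have hanti : StrictAntiOn (fun ρ => V ρ wminus) (Icc (0:ℝ) ρmax) := by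
    intro a ha b hb hab
    simp only []
    rcases le_or_gt b ρf with hbf | hbf
    · rw [hVfree a ha.1 (hab.le.trans hbf), hVfree b (ha.1.trans hab.le) hbf]
      have : a / ρmax < b / ρmax := by gcongr
      nlinarith
    rcases le_or_gt a ρf with haf | haf
    · -- a in free, b in congested
      rw [hVfree a ha.1 haf, hVcong b hbf.le]
      have hb0 : (0:ℝ) < b := hρf.trans hbf
      have hc0 : 0 ≤ 1 - b / ρmax := by
        rw [sub_nonneg, div_le_one hρm]; exact hb.2
      have hd1 : l + (1 - l) * ρf / b ≤ 1 := by
        have : (1 - l) * ρf / b ≤ 1 - l := by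
          rw [div_le_iff₀ hb0]; nlinarith
        linarith
      have hab' : a / ρmax < b / ρmax := by gcongr
      calc Vmax * (1 - b / ρmax) * (l + (1 - l) * ρf / b)
          ≤ Vmax * (1 - b / ρmax) * 1 := by
            apply mul_le_mul_of_nonneg_left hd1 (by positivity)
        _ = Vmax * (1 - b / ρmax) := by ring
        _ < Vmax * (1 - a / ρmax) := by
            apply mul_lt_mul_of_pos_left _ hV
            linarith
    · -- both congested
      rw [hVcong a haf.le, hVcong b (haf.trans hab).le]
      have ha0 : (0:ℝ) < a := hρf.trans haf
      have hb0 : (0:ℝ) < b := ha0.trans hab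
      have hca : 0 < 1 - a / ρmax := by
        rw [sub_pos, div_lt_one hρm]; exact hab.trans_le hb.2
      have hcb : 0 ≤ 1 - b / ρmax := by
        rw [sub_nonneg, div_le_one hρm]; exact hb.2
      have hcc : 1 - b / ρmax < 1 - a / ρmax := by
        have : a / ρmax < b / ρmax := by gcongr
        linarith
      have hda := hfac a haf.le
      have hdb := hfac b (haf.trans hab).le
      have hdd : l + (1 - l) * ρf / b ≤ l + (1 - l) * ρf / a := by
        have : (1 - l) * ρf / b ≤ (1 - l) * ρf / a := by
          apply div_le_div_of_nonneg_left (by nlinarith) ha0 hab.le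
        linarith
      calc Vmax * (1 - b / ρmax) * (l + (1 - l) * ρf / b)
          = Vmax * ((1 - b / ρmax) * (l + (1 - l) * ρf / b)) := by ring
        _ < Vmax * ((1 - a / ρmax) * (l + (1 - l) * ρf / a)) := by
            apply mul_lt_mul_of_pos_left _ hV
            exact mul_lt_mul hcc hdd hdb hca.le
        _ = Vmax * (1 - a / ρmax) * (l + (1 - l) * ρf / a) := by ring
  -- existence
  have hex : ∃ ρs ∈ Icc (0:ℝ) ρmax, V ρs wminus = vplus := by
    rcases le_or_gt (Vmax * (1 - ρf / ρmax)) vplus with h1 | h1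
    · -- free branch, explicit solution
      refine ⟨ρmax * (1 - vplus / Vmax), ?_, ?_⟩
      · constructor
        · have : vplus / Vmax ≤ 1 := (div_le_one hV).2 hvV
          nlinarith
        · have : 0 ≤ vplus / Vmax := div_nonneg hv0 hV.le
          nlinarith
      · have hle : ρmax * (1 - vplus / Vmax) ≤ ρf := by
          have h1' : 1 - ρf / ρmax ≤ vplus / Vmax := by
            rw [le_div_iff₀ hV]; linarith
          have key : ρmax * (ρf / ρmax) = ρf := by field_simp
          nlinarith
        have h0 : 0 ≤ ρmax * (1 - vplus / Vmax) := by
          have : vplus / Vmax ≤ 1 := (div_le_one hV).2 hvV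
          nlinarith
        rw [hVfree _ h0 hle]
        field_simp
        ring
    · -- congested branch, IVT
      set g : ℝ → ℝ := fun ρ => Vmax * (1 - ρ / ρmax) * (l + (1 - l) * ρf / ρ)
        with hgdef
      have hg : ContinuousOn g (Icc ρf ρmax) := by
        apply ContinuousOn.mul
        · exact (continuous_const.mul
            (continuous_const.sub (continuous_id.div_const _))).continuousOn
        · exact continuousOn_const.add (continuousOn_const.div continuousOn_id
            fun x hx => (hρf.trans_le hx.1).ne')
      have hgf : g ρf = Vmax * (1 - ρf / ρmax) := by
        rw [hgdef]
        simp only []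
        rw [mul_div_assoc, div_self hρf.ne']
        ring
      have hgm : g ρmax = 0 := by
        rw [hgdef]
        simp only []
        rw [div_self hρm.ne']
        ring
      have hmem : vplus ∈ Icc (g ρmax) (g ρf) := by
        rw [hgf, hgm]; exact ⟨hv0, h1.le⟩
      obtain ⟨ρs, hρs, hgρs⟩ := intermediate_value_Icc' hρfm.le hg hmem
      refine ⟨ρs, ⟨hρf.le.trans hρs.1, hρs.2⟩, ?_⟩
      rw [hVcong ρs hρs.1]
      exact hgρs
  obtain ⟨ρs, hρsmem, hρseq⟩ := hex
  refine ⟨ρs, ⟨hρsmem, hρseq⟩, ?_⟩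
  rintro y ⟨hymem, hyeq⟩
  exact hanti.injOn hymem hρsmem (by rw [hyeq, hρseq])
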